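/- arXiv:1409.1466 — 4 statements merged into one kernel-verified Lean document; each statement's English description precedes it below -/
import Mathlib

section
/- If a graph G admits simplicial vertices x₁,…,x_k such that the closed neighborhoods N[x₁],…,N[x_k] partition V(G), then every minimal dominating set of G has exactly k vertices; in particular G is well-dominated. -/
/-- `S` is a dominating set of `G`: every vertex is in `S` or adjacent to a vertex of `S`. -/
def Dominates {V : Type*} (G : SimpleGraph V) (S : Finset V) : Prop :=
  ∀ v : V, v ∈ S ∨ ∃ u ∈ S, G.Adj u v

/-- `S` is a minimal dominating set of `G`. -/
def IsMinDomSet {V : Type*} (G : SimpleGraph V) (S : Finset V) : Prop :=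
  Dominates G S ∧ ∀ T : Finset V, T ⊂ S → ¬ Dominates G T

/-- `S` is an independent set of `G`. -/
def IsIndepSet {V : Type*} (G : SimpleGraph V) (S : Finset V) : Prop :=
  ∀ u ∈ S, ∀ v ∈ S, ¬ G.Adj u v

/-- `S` is a maximal independent set of `G`. -/
def IsMaxIndepSet {V : Type*} (G : SimpleGraph V) (S : Finset V) : Prop :=
  IsIndepSet G S ∧ ∀ T : Finset V, IsIndepSet G T → S ⊆ T → S = T

/-- The closed neighborhood of a vertex. -/
def closedNbhd {V : Type*} (G : SimpleGraph V) (x : V) : Set V :=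
  {u | u = x ∨ G.Adj x u}

/-- `x` is a simplicial vertex: its closed neighborhood is a clique. -/
def Simplicial {V : Type*} (G : SimpleGraph V) (x : V) : Prop :=
  ∀ u ∈ closedNbhd G x, ∀ v ∈ closedNbhd G x, u ≠ v → G.Adj u v

/-!
Every vertex `u` of a minimal dominating set `S` has a private neighbour `p ∈ N[u]`, dominated
by no other vertex of `S`. Since `S` dominates each `x i`, it meets every clique `N[x i]`; the
vertex of `S` in the clique containing `p` dominates `p`, so it is `u`. Hence `u` and `p` lie in
the same clique, and any other vertex of `S` in that clique would also dominate `p`. So `S`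
meets each of the `k` cliques in exactly one vertex.
-/

section

variable {V : Type*} {G : SimpleGraph V}

theorem mem_closedNbhd_comm {u v : V} : u ∈ closedNbhd G v ↔ v ∈ closedNbhd G u := by
  simp only [closedNbhd, Set.mem_ofPred_eq, G.adj_comm, eq_comm]

theorem dominates_iff_forall_exists_mem_closedNbhd {S : Finset V} :
    Dominates G S ↔ ∀ v, ∃ u ∈ S, v ∈ closedNbhd G u := by
  refine forall_congr' fun v => ⟨?_, ?_⟩
  · rintro (hv | ⟨u, hu, huv⟩)
    · exact ⟨v, hv, Or.inl rfl⟩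
    · exact ⟨u, hu, Or.inr huv⟩
  · rintro ⟨u, hu, rfl | huv⟩
    · exact Or.inl hu
    · exact Or.inr ⟨u, hu, huv⟩

theorem Dominates.exists_mem_closedNbhd {S : Finset V} (hS : Dominates G S) (v : V) :
    ∃ s ∈ S, s ∈ closedNbhd G v := by
  obtain ⟨s, hs, hvs⟩ := dominates_iff_forall_exists_mem_closedNbhd.mp hS v
  exact ⟨s, hs, mem_closedNbhd_comm.mp hvs⟩

theorem Simplicial.mem_closedNbhd_of_mem {x u p : V} (hx : Simplicial G x)
    (hu : u ∈ closedNbhd G x) (hp : p ∈ closedNbhd G x) : p ∈ closedNbhd G u := by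
  by_cases hpu : p = u
  · exact Or.inl hpu
  · exact Or.inr (hx u hu p hp (Ne.symm hpu))

theorem IsMinDomSet.exists_private_nbhd {S : Finset V} (hS : IsMinDomSet G S) {u : V}
    (hu : u ∈ S) : ∃ p ∈ closedNbhd G u, ∀ s ∈ S, p ∈ closedNbhd G s → s = u := by
  classical
  have hnot := hS.2 _ (Finset.erase_ssubset hu)
  simp only [dominates_iff_forall_exists_mem_closedNbhd, Finset.mem_erase, not_forall,
    not_exists, not_and] at hnot
  obtain ⟨p, hp⟩ := hnot
  have hpriv : ∀ s ∈ S, p ∈ closedNbhd G s → s = u :=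
    fun s hs hps => by_contra fun hsu => hp s ⟨hsu, hs⟩ hps
  obtain ⟨s, hs, hps⟩ := dominates_iff_forall_exists_mem_closedNbhd.mp hS.1 p
  exact ⟨p, hpriv s hs hps ▸ hps, hpriv⟩

theorem IsMinDomSet.eq_of_mem_closedNbhd {k : ℕ} {x : Fin k → V}
    (hsimp : ∀ i, Simplicial G (x i)) (hpart : ∀ v : V, ∃! i : Fin k, v ∈ closedNbhd G (x i))
    {S : Finset V} (hS : IsMinDomSet G S) {i : Fin k} {u v : V} (hu : u ∈ S) (hv : v ∈ S)
    (hui : u ∈ closedNbhd G (x i)) (hvi : v ∈ closedNbhd G (x i)) : v = u := by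
  obtain ⟨p, -, hpriv⟩ := hS.exists_private_nbhd hu
  obtain ⟨j, hpj, -⟩ := hpart p
  obtain ⟨s, hs, hsj⟩ := hS.1.exists_mem_closedNbhd (x j)
  have hsu : s = u := hpriv s hs ((hsimp j).mem_closedNbhd_of_mem hsj hpj)
  have hij : i = j := (hpart u).unique hui (hsu ▸ hsj)
  exact hpriv v hv ((hsimp i).mem_closedNbhd_of_mem hvi (hij ▸ hpj))

theorem IsMinDomSet.card_eq_of_simplicial_partition {k : ℕ} {x : Fin k → V}
    (hsimp : ∀ i, Simplicial G (x i)) (hpart : ∀ v : V, ∃! i : Fin k, v ∈ closedNbhd G (x i))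
    {S : Finset V} (hS : IsMinDomSet G S) : S.card = k := by
  calc S.card = (Finset.univ : Finset (Fin k)).card := by
        refine Finset.card_bij (fun v _ => (hpart v).choose) (fun _ _ => Finset.mem_univ _) ?_ ?_
        · intro u hu v hv huv
          exact hS.eq_of_mem_closedNbhd hsimp hpart hv hu (hpart v).choose_spec.1
            (huv ▸ (hpart u).choose_spec.1)
        · intro i _
          obtain ⟨s, hs, hsi⟩ := hS.1.exists_mem_closedNbhd (x i)
          exact ⟨s, hs, (hpart s).unique (hpart s).choose_spec.1 hsi⟩
    _ = k := Finset.card_fin k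

end

theorem minDomSet_card_eq_of_simplicial_partition_general {V : Type*}
    (G : SimpleGraph V) (k : ℕ) (x : Fin k → V)
    (hsimp : ∀ i, Simplicial G (x i))
    (hpart : ∀ v : V, ∃! i : Fin k, v ∈ closedNbhd G (x i)) :
    (∀ S : Finset V, IsMinDomSet G S → S.card = k) ∧
    (∀ S T : Finset V, IsMinDomSet G S → IsMinDomSet G T → S.card = T.card) := by
  have card_eq : ∀ S : Finset V, IsMinDomSet G S → S.card = k :=
    fun _ hS => hS.card_eq_of_simplicial_partition hsimp hpart
  exact ⟨card_eq, fun S T hS hT => by rw [card_eq S hS, card_eq T hT]⟩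

/-- If the closed neighborhoods of simplicial vertices `x 0, …, x (k-1)` partition `V(G)`,
then every minimal dominating set has exactly `k` vertices; in particular `G` is
well-dominated. -/
theorem minDomSet_card_eq_of_simplicial_partition {V : Type*} [Fintype V] [DecidableEq V]
    (G : SimpleGraph V) (k : ℕ) (x : Fin k → V)
    (hsimp : ∀ i, Simplicial G (x i))
    (hpart : ∀ v : V, ∃! i : Fin k, v ∈ closedNbhd G (x i)) :
    (∀ S : Finset V, IsMinDomSet G S → S.card = k) ∧
    (∀ S T : Finset V, IsMinDomSet G S → IsMinDomSet G T → S.card = T.card) :=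
  minDomSet_card_eq_of_simplicial_partition_general G k x hsimp hpart
end

section
/- For the 7-cycle C₇ and a weight function w : V(C₇) → ℝ, C₇ is w-well-dominated if and only if w is constant; in that case every minimal dominating set has weight 3k where w ≡ k. -/
/-! For each vertex `j` of `C₇`, the sets `{j, j+3, j+5}` and `{j+1, j+3, j+5}` are both minimal
dominating, so well-domination forces `w j = w (j+1)`, and going around the cycle makes `w` constant.
Conversely, every minimal dominating set of `C₇` has three vertices (checked exhaustively), so a
constant weight `k` gives each of them the weight `3k`. -/

open Fin.NatCast in
theorem Fin.apply_eq_apply_zero_of_apply_add_one {n : ℕ} [NeZero n] {α : Type*} {f : Fin n → α}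
    (h : ∀ j, f (j + 1) = f j) (j : Fin n) : f j = f 0 := by
  have hcast : ∀ k : ℕ, f k = f 0 := by
    intro k
    induction k with
    | zero => rw [Nat.cast_zero]
    | succ k ih => rw [Nat.cast_succ, h, ih]
  simpa using hcast j

section Domination

variable {V : Type*} (G : SimpleGraph V)

instance [Fintype V] [DecidableEq V] [DecidableRel G.Adj] (S : Finset V) :
    Decidable (Dominates G S) := by
  unfold Dominates; infer_instance

instance [Fintype V] [DecidableEq V] [DecidableRel G.Adj] (S : Finset V) :
    Decidable (IsMinDomSet G S) := by
  unfold IsMinDomSet; infer_instance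

def IsWellDominated {β : Type*} [AddCommMonoid β] (w : V → β) : Prop :=
  ∀ S T : Finset V, IsMinDomSet G S → IsMinDomSet G T → ∑ v ∈ S, w v = ∑ v ∈ T, w v

variable {G}

theorem IsWellDominated.apply_eq_of_isMinDomSet_insert [DecidableEq V] {β : Type*}
    [AddCancelCommMonoid β] {w : V → β} (hw : IsWellDominated G w) {s : Finset V} {a b : V}
    (ha : a ∉ s) (hb : b ∉ s) (hsa : IsMinDomSet G (insert a s))
    (hsb : IsMinDomSet G (insert b s)) : w a = w b := by
  have := hw _ _ hsa hsb
  rw [Finset.sum_insert ha, Finset.sum_insert hb] at this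
  exact add_right_cancel this

theorem sum_eq_card_nsmul_of_isMinDomSet {β : Type*} [AddCommMonoid β] {w : V → β} {k : β}
    {m : ℕ} (hcard : ∀ S : Finset V, IsMinDomSet G S → S.card = m) (hw : ∀ v, w v = k)
    {S : Finset V} (hS : IsMinDomSet G S) : ∑ v ∈ S, w v = m • k := by
  rw [Finset.sum_congr rfl fun v _ => hw v, Finset.sum_const, hcard S hS]

end Domination

set_option maxRecDepth 10000 in
theorem cycleGraph_seven_card_of_isMinDomSet :
    ∀ S : Finset (Fin 7), IsMinDomSet (SimpleGraph.cycleGraph 7) S → S.card = 3 := by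
  decide

set_option maxRecDepth 10000 in
theorem cycleGraph_seven_isMinDomSet_insert : ∀ j : Fin 7,
    j ∉ ({j + 3, j + 5} : Finset (Fin 7)) ∧ j + 1 ∉ ({j + 3, j + 5} : Finset (Fin 7)) ∧
    IsMinDomSet (SimpleGraph.cycleGraph 7) (insert j {j + 3, j + 5}) ∧
    IsMinDomSet (SimpleGraph.cycleGraph 7) (insert (j + 1) {j + 3, j + 5}) := by
  decide

/-- `C₇` is `w`-well-dominated iff `w` is constant, in which case every minimal
dominating set has weight `3k` where `w ≡ k`. -/
theorem c7_wwd_iff_const (w : Fin 7 → ℝ) :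
    ((∀ S T : Finset (Fin 7), IsMinDomSet (SimpleGraph.cycleGraph 7) S →
        IsMinDomSet (SimpleGraph.cycleGraph 7) T → (∑ v ∈ S, w v) = (∑ v ∈ T, w v)) ↔
      (∃ k : ℝ, ∀ v, w v = k)) ∧
    (∀ k : ℝ, (∀ v, w v = k) →
      ∀ S : Finset (Fin 7), IsMinDomSet (SimpleGraph.cycleGraph 7) S →
        (∑ v ∈ S, w v) = 3 * k) := by
  have hweight (k : ℝ) (hk : ∀ v, w v = k) (S : Finset (Fin 7))
      (hS : IsMinDomSet (SimpleGraph.cycleGraph 7) S) : ∑ v ∈ S, w v = 3 * k := by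
    rw [sum_eq_card_nsmul_of_isMinDomSet cycleGraph_seven_card_of_isMinDomSet hk hS, nsmul_eq_mul,
      Nat.cast_ofNat]
  refine ⟨⟨fun hw => ⟨w 0, Fin.apply_eq_apply_zero_of_apply_add_one fun j => ?_⟩, ?_⟩, hweight⟩
  · obtain ⟨hj, hj1, hS, hS1⟩ := cycleGraph_seven_isMinDomSet_insert j
    exact (IsWellDominated.apply_eq_of_isMinDomSet_insert hw hj hj1 hS hS1).symm
  · rintro ⟨k, hk⟩ S T hS hT
    rw [hweight k hk S hS, hweight k hk T hT]
end

section
/- Let G consist of three vertex-disjoint 5-cycles (x₁,…,x₅), (y₁,…,y₅), (z₁,…,z₅) together with the additional triangle edges x₁y₁, y₁z₁, z₁x₁. Then G is well-covered with every maximal independent set of size 6, but G is not well-dominated, since {x₁,x₂,x₅,y₃,y₄,z₃,z₄} is a minimal dominating set of size 7 while there exists a minimal dominating set of size 6. -/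
/-- Three disjoint 5-cycles whose first vertices form a triangle. Vertex `(g, i)` is the
`i`-th vertex of the `g`-th 5-cycle; `x₁ = (0,0)`, `y₁ = (1,0)`, `z₁ = (2,0)`. -/
def threeCycleGraph : SimpleGraph (Fin 3 × ZMod 5) :=
  SimpleGraph.fromRel (fun a b =>
    (a.1 = b.1 ∧ b.2 = a.2 + 1) ∨ (a.1 ≠ b.1 ∧ a.2 = 0 ∧ b.2 = 0))

/-! A maximal independent set `S` is dominating, so on each 5-cycle its trace is an
independent set of `C₅` dominating the four vertices other than the triangle vertex (which may be
dominated from the triangle); such a set has exactly two vertices, hence `|S| = 3 · 2 = 6`.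
An independent dominating set is a minimal dominating set, which gives one with 6 vertices. -/

open Finset

section Domination

variable {V : Type*} {G : SimpleGraph V}

instance inst_s13 [Fintype V] [DecidableEq V] [DecidableRel G.Adj] (S : Finset V) :
    Decidable (Dominates G S) := by unfold Dominates; infer_instance

instance [DecidableEq V] [DecidableRel G.Adj] (S : Finset V) : Decidable (IsIndepSet G S) := by
  unfold IsIndepSet; infer_instance

lemma Dominates.mono {S T : Finset V} (hST : S ⊆ T) (hS : Dominates G S) : Dominates G T := by
  intro v
  rcases hS v with hv | ⟨u, hu, huv⟩
  · exact .inl (hST hv)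
  · exact .inr ⟨u, hST hu, huv⟩

lemma isMinDomSet_of_forall_not_dominates_erase [DecidableEq V] {S : Finset V}
    (hS : Dominates G S) (herase : ∀ v ∈ S, ¬ Dominates G (S.erase v)) : IsMinDomSet G S := by
  refine ⟨hS, fun T hTS hT => ?_⟩
  obtain ⟨v, hvS, hvT⟩ := exists_of_ssubset hTS
  exact herase v hvS (hT.mono fun x hx => mem_erase.mpr ⟨ne_of_mem_of_not_mem hx hvT, hTS.1 hx⟩)

lemma IsIndepSet.isMinDomSet {S : Finset V} (hi : IsIndepSet G S) (hd : Dominates G S) :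
    IsMinDomSet G S := by
  refine ⟨hd, fun T hTS hT => ?_⟩
  obtain ⟨v, hvS, hvT⟩ := exists_of_ssubset hTS
  rcases hT v with hv | ⟨u, huT, huv⟩
  · exact hvT hv
  · exact hi u (hTS.1 huT) v hvS huv

lemma IsMaxIndepSet.dominates [DecidableEq V] {S : Finset V} (hS : IsMaxIndepSet G S) :
    Dominates G S := by
  intro v
  by_contra! hv
  obtain ⟨hvS, hvN⟩ := hv
  have hind : IsIndepSet G (insert v S) := by
    intro a ha b hb
    rcases mem_insert.mp ha with rfl | haS <;> rcases mem_insert.mp hb with rfl | hbS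
    · exact G.loopless.irrefl _
    · exact fun hab => hvN b hbS hab.symm
    · exact hvN a haS
    · exact hS.1 a haS b hbS
  exact hvS ((hS.2 _ hind (subset_insert v S)) ▸ mem_insert_self v S)

end Domination

section Layer

variable {α β : Type*} [Fintype β] [DecidableEq α] [DecidableEq β]

def layer (S : Finset (α × β)) (a : α) : Finset β :=
  {b | (a, b) ∈ S}

@[simp]
lemma mem_layer {S : Finset (α × β)} {a : α} {b : β} : b ∈ layer S a ↔ (a, b) ∈ S := by
  simp [layer]

lemma card_eq_sum_card_layer [Fintype α] (S : Finset (α × β)) : #S = ∑ a, #(layer S a) := by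
  simp only [layer, card_filter]
  rw [← Fintype.sum_prod_type (fun p => if p ∈ S then 1 else 0), ← card_filter,
    filter_mem_eq_inter, univ_inter]

end Layer

def cycleFive : SimpleGraph (ZMod 5) := SimpleGraph.fromRel fun i j => j = i + 1

instance : DecidableRel cycleFive.Adj := fun i j => by
  unfold cycleFive; rw [SimpleGraph.fromRel_adj]; infer_instance

lemma cycleFive_card_eq_two_of_isIndepSet_of_dominates_ne_zero :
    ∀ A : Finset (ZMod 5), IsIndepSet cycleFive A →
      (∀ i ≠ 0, i ∈ A ∨ ∃ j ∈ A, cycleFive.Adj j i) → #A = 2 := by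
  decide

instance : DecidableRel threeCycleGraph.Adj := fun u v => by
  unfold threeCycleGraph; rw [SimpleGraph.fromRel_adj]; infer_instance

lemma threeCycleGraph_adj_mk_mk_iff :
    ∀ g i j, threeCycleGraph.Adj (g, i) (g, j) ↔ cycleFive.Adj i j := by
  decide

lemma threeCycleGraph_adj_fst_eq_of_ne_zero :
    ∀ u v : Fin 3 × ZMod 5, threeCycleGraph.Adj u v → v.2 ≠ 0 → u.1 = v.1 := by
  decide

lemma IsMaxIndepSet.card_layer_eq_two {S : Finset (Fin 3 × ZMod 5)}
    (hS : IsMaxIndepSet threeCycleGraph S) (g : Fin 3) : #(layer S g) = 2 := by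
  refine cycleFive_card_eq_two_of_isIndepSet_of_dominates_ne_zero _ ?_ ?_
  · intro i hi j hj hij
    exact hS.1 _ (mem_layer.mp hi) _ (mem_layer.mp hj)
      ((threeCycleGraph_adj_mk_mk_iff g i j).mpr hij)
  · intro i hi
    rcases hS.dominates (g, i) with hgi | ⟨⟨g', j⟩, hu, hadj⟩
    · exact .inl (mem_layer.mpr hgi)
    · obtain rfl : g' = g := threeCycleGraph_adj_fst_eq_of_ne_zero _ _ hadj hi
      exact .inr ⟨j, mem_layer.mpr hu, (threeCycleGraph_adj_mk_mk_iff g' j i).mp hadj⟩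

lemma threeCycleGraph_card_of_isMaxIndepSet {S : Finset (Fin 3 × ZMod 5)}
    (hS : IsMaxIndepSet threeCycleGraph S) : #S = 6 := by
  simp [card_eq_sum_card_layer S, hS.card_layer_eq_two]

/-- The graph of three disjoint 5-cycles joined by a triangle is well-covered (all maximal
independent sets have 6 vertices), but not well-dominated: `{x₁,x₂,x₅,y₃,y₄,z₃,z₄}` is a
minimal dominating set of size 7, while there is a minimal dominating set of size 6. -/
theorem threeCycleGraph_wellCovered_not_wellDominated :
    (∀ S : Finset (Fin 3 × ZMod 5), IsMaxIndepSet threeCycleGraph S → S.card = 6) ∧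
    IsMinDomSet threeCycleGraph
      ({(0,0),(0,1),(0,4),(1,2),(1,3),(2,2),(2,3)} : Finset (Fin 3 × ZMod 5)) ∧
    ({(0,0),(0,1),(0,4),(1,2),(1,3),(2,2),(2,3)} : Finset (Fin 3 × ZMod 5)).card = 7 ∧
    (∃ S : Finset (Fin 3 × ZMod 5), IsMinDomSet threeCycleGraph S ∧ S.card = 6) := by
  refine ⟨fun S => threeCycleGraph_card_of_isMaxIndepSet, ?_, by decide, ?_⟩
  · exact isMinDomSet_of_forall_not_dominates_erase (by decide) (by decide)
  · refine ⟨{(0,0),(0,2),(1,2),(1,4),(2,2),(2,4)}, IsIndepSet.isMinDomSet (by decide) (by decide),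
      by decide⟩
end

section
/- If {N[x_i] : 1 ≤ i ≤ k} is a partition of V(G) for simplicial vertices x₁,…,x_k, and w : V(G) → ℝ satisfies that w is constant on each clique N[x_i] restricted to the vertices that can appear in minimal dominating sets—specifically, if every vertex u ∈ N[x_i] satisfies w(u) = w(x_i)—then G is w-well-dominated with every minimal dominating set of weight Σ_i w(x_i). -/
/-
Every block `N[x i]` meets a dominating set `S`, since `x i` is dominated. If `S` is minimal,
a vertex `a ∈ S` has a private neighbour `z`, lying in some block `N[x j]`. Blocks are cliques, so
the vertex of `S` in `N[x j]` dominates `z` and therefore is `a`; thus `z` lies in the block of `a`,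
and any other vertex of `S` in that block would dominate `z` too. So `S` meets every block exactly
once, and its weight is one value `w (x i)` per block.
-/

section ClosedNbhd

variable {V : Type*} {G : SimpleGraph V}

theorem self_mem_closedNbhd (v : V) : v ∈ closedNbhd G v := Or.inl rfl

theorem dominates_iff {S : Finset V} : Dominates G S ↔ ∀ v, ∃ s ∈ S, v ∈ closedNbhd G s := by
  refine forall_congr' fun v => ⟨?_, ?_⟩
  · rintro (hv | ⟨s, hs, hsv⟩)
    exacts [⟨v, hv, self_mem_closedNbhd v⟩, ⟨s, hs, Or.inr hsv⟩]
  · rintro ⟨s, hs, rfl | hsv⟩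
    exacts [Or.inl hs, Or.inr ⟨s, hs, hsv⟩]

theorem Simplicial.mem_closedNbhd {x u v : V} (hx : Simplicial G x)
    (hu : u ∈ closedNbhd G x) (hv : v ∈ closedNbhd G x) : v ∈ closedNbhd G u := by
  by_cases huv : v = u
  · exact Or.inl huv
  · exact Or.inr (hx u hu v hv (Ne.symm huv))

theorem IsMinDomSet.exists_private_nbr {S : Finset V} (hS : IsMinDomSet G S) {u : V}
    (hu : u ∈ S) : ∃ z ∈ closedNbhd G u, ∀ s ∈ S, z ∈ closedNbhd G s → s = u := by
  classical
  obtain ⟨z, hz⟩ : ∃ z, ∀ s ∈ S.erase u, z ∉ closedNbhd G s := by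
    simpa [dominates_iff] using hS.2 _ (Finset.erase_ssubset hu)
  have hprivate : ∀ s ∈ S, z ∈ closedNbhd G s → s = u := fun s hs hzs =>
    by_contra fun hsu => hz s (Finset.mem_erase.mpr ⟨hsu, hs⟩) hzs
  obtain ⟨s, hs, hzs⟩ := dominates_iff.mp hS.1 z
  exact ⟨z, hprivate s hs hzs ▸ hzs, hprivate⟩

end ClosedNbhd

theorem Finset.sum_eq_sum_of_existsUnique_mem_block {V ι M : Type*} [Fintype ι] [AddCommMonoid M]
    {B : ι → Set V} (hB : ∀ v, ∃! i, v ∈ B i) {S : Finset V} (hS : ∀ i, ∃! s, s ∈ S ∧ s ∈ B i)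
    {w : V → M} {c : ι → M} (hw : ∀ i, ∀ v ∈ B i, w v = c i) :
    ∑ v ∈ S, w v = ∑ i, c i := by
  choose block hblock using fun v => (hB v).exists
  refine Finset.sum_nbij block (fun _ _ => Finset.mem_univ _) ?_ ?_ fun v _ => hw _ v (hblock v)
  · intro a ha b hb hab
    exact (hS (block a)).unique ⟨ha, hblock a⟩ ⟨hb, hab ▸ hblock b⟩
  · intro i _
    obtain ⟨s, hs, hsi⟩ := (hS i).exists
    exact ⟨s, hs, (hB s).unique (hblock s) hsi⟩

theorem IsMinDomSet.existsUnique_mem_closedNbhd {V : Type*} {G : SimpleGraph V} {k : ℕ}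
    {x : Fin k → V} (hsimp : ∀ i, Simplicial G (x i))
    (hpart : ∀ v : V, ∃! i : Fin k, v ∈ closedNbhd G (x i)) {S : Finset V}
    (hS : IsMinDomSet G S) (i : Fin k) : ∃! s, s ∈ S ∧ s ∈ closedNbhd G (x i) := by
  obtain ⟨a, ha, hai⟩ := hS.1.exists_mem_closedNbhd (x i)
  refine ⟨a, ⟨ha, hai⟩, fun b ⟨hb, hbi⟩ => ?_⟩
  obtain ⟨z, -, hzpriv⟩ := hS.exists_private_nbr ha
  obtain ⟨j, hzj, -⟩ := hpart z
  obtain ⟨s, hs, hsj⟩ := hS.1.exists_mem_closedNbhd (x j)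
  have hsa : s = a := hzpriv s hs ((hsimp j).mem_closedNbhd hsj hzj)
  have hji : j = i := (hpart a).unique (hsa ▸ hsj) hai
  exact hzpriv b hb ((hsimp i).mem_closedNbhd hbi (hji ▸ hzj))

theorem wwd_of_simplicial_partition_const_weights_general {V : Type*}
    (G : SimpleGraph V) (k : ℕ) (x : Fin k → V)
    (hsimp : ∀ i, Simplicial G (x i))
    (hpart : ∀ v : V, ∃! i : Fin k, v ∈ closedNbhd G (x i))
    (w : V → ℝ) (hw : ∀ i : Fin k, ∀ u ∈ closedNbhd G (x i), w u = w (x i)) :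
    (∀ S : Finset V, IsMinDomSet G S → (∑ v ∈ S, w v) = ∑ i : Fin k, w (x i)) ∧
    (∀ S T : Finset V, IsMinDomSet G S → IsMinDomSet G T →
      (∑ v ∈ S, w v) = (∑ v ∈ T, w v)) := by
  have hweight : ∀ S : Finset V, IsMinDomSet G S → (∑ v ∈ S, w v) = ∑ i : Fin k, w (x i) :=
    fun S hS => Finset.sum_eq_sum_of_existsUnique_mem_block hpart
      (hS.existsUnique_mem_closedNbhd hsimp hpart) hw
  exact ⟨hweight, fun S T hS hT => (hweight S hS).trans (hweight T hT).symm⟩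

/-- If the closed neighborhoods of simplicial vertices partition `V(G)` and `w` is constant
on each closed neighborhood `N[x i]` (equal to `w (x i)`), then `G` is `w`-well-dominated
and every minimal dominating set has weight `∑ i, w (x i)`. -/
theorem wwd_of_simplicial_partition_const_weights {V : Type*} [Fintype V] [DecidableEq V]
    (G : SimpleGraph V) (k : ℕ) (x : Fin k → V)
    (hsimp : ∀ i, Simplicial G (x i))
    (hpart : ∀ v : V, ∃! i : Fin k, v ∈ closedNbhd G (x i))
    (w : V → ℝ) (hw : ∀ i : Fin k, ∀ u ∈ closedNbhd G (x i), w u = w (x i)) :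
    (∀ S : Finset V, IsMinDomSet G S → (∑ v ∈ S, w v) = ∑ i : Fin k, w (x i)) ∧
    (∀ S T : Finset V, IsMinDomSet G S → IsMinDomSet G T →
      (∑ v ∈ S, w v) = (∑ v ∈ T, w v)) :=
  wwd_of_simplicial_partition_const_weights_general G k x hsimp hpart w hw
end
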